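/- arXiv:1904.13062 — 4 statements merged into one kernel-verified Lean document; each statement's English description precedes it below -/
import Mathlib

section
/- Cut-off lemma with factorial derivative bounds. For every n ∈ ℕ there exists a constant 𝒞_ن > 0 (depending only on n and d; e.g. one can take 𝒞₁ = 4e/3) such that for every R > 0 and every nonempty Δ ⊂ ℝ^d there exists χ ∈ C^∞(ℝ^d) with 0 ≤ χ ≤ 1, supp χ contained in Δ_R := ∪_{ω∈Δ} B_R(ω), χ ≡ 1 on Δ_{R/2}, and for every multi-index m ∈ ℕ^d with |m|₁ ≤ n: sup_{ℝ^d} |∂^m_ω χ| ≤ 𝒞_n (|m|₁ + 2)! / R^{|m|₁}. -/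
/-!
Convolve the indicator of the `3/4`-neighbourhood of `Δ` with a normalized bump `φ` supported in
the ball of radius `1/4`: the result lies in `[0, 1]`, equals `1` on the `1/2`-neighbourhood and
vanishes outside the `1`-neighbourhood. Its derivatives fall on `φ`, so they are bounded by
`‖∂^m φ‖₁`. Rescaling `y ↦ y / R` moves everything to scale `R` and contributes
the factor `R^{-|m|₁}`; the constant is the largest of the finitely many `‖∂^m φ‖₁`, `|m|₁ ≤ n`.
-/

set_option autoImplicit false

noncomputable section

/-- Partial derivative in the `i`-th coordinate direction. -/
noncomputable def pderivR {d : ℕ} (i : Fin d) (f : (Fin d → ℝ) → ℝ) : (Fin d → ℝ) → ℝ :=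
  fun y => fderiv ℝ f y (Pi.single i 1)

/-- Multi-index partial derivative `∂^m`. -/
noncomputable def mderivR {d : ℕ} (m : Fin d → ℕ) (f : (Fin d → ℝ) → ℝ) :
    (Fin d → ℝ) → ℝ :=
  (Finset.univ : Finset (Fin d)).toList.foldr (fun i g => (pderivR i)^[m i] g) f

open scoped Convolution Pointwise
open MeasureTheory Function Metric Set ContinuousLinearMap

section MollifiedIndicator

variable {G : Type*} [NormedAddCommGroup G] [MeasurableSpace G] {μ : Measure G} {φ : G → ℝ}

theorem support_convolution_subset_thickening {g : G → ℝ} {ε : ℝ}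
    (hφ : support φ ⊆ ball 0 ε) :
    support (φ ⋆[lsmul ℝ ℝ, μ] g) ⊆ thickening ε (support g) :=
  (support_convolution_subset _).trans
    ((add_subset_add_right hφ).trans (ball_add_zero ..).subset)

theorem convolution_indicator_one_mem_Icc {s : Set G} (hφ : 0 ≤ φ) (hφ1 : ∫ t, φ t ∂μ = 1)
    (x : G) : (φ ⋆[lsmul ℝ ℝ, μ] s.indicator (1 : G → ℝ)) x ∈ Icc 0 1 := by
  have hφi : Integrable φ μ := Integrable.of_integral_ne_zero (by simp [hφ1])
  have hφ_one : (φ ⋆[lsmul ℝ ℝ, μ] (1 : G → ℝ)) x = 1 := by simpa [convolution_def] using hφ1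
  refine ⟨integral_nonneg fun t => mul_nonneg (hφ t) (indicator_nonneg (by simp) _), ?_⟩
  rw [← hφ_one]
  exact convolution_mono_right_of_nonneg (by simpa [ConvolutionExistsAt] using hφi) hφ
    (indicator_le_self' fun _ _ => zero_le_one) fun _ => zero_le_one

theorem convolution_indicator_one_eqOn_one {s : Set G} {ε δ : ℝ} (hε : 0 < ε)
    (hφ : support φ ⊆ ball 0 ε) (hφ1 : ∫ t, φ t ∂μ = 1) :
    EqOn (φ ⋆[lsmul ℝ ℝ, μ] (thickening (ε + δ) s).indicator (1 : G → ℝ)) 1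
      (thickening δ s) := by
  intro x hx
  have hball : ball x ε ⊆ thickening (ε + δ) s :=
    (thickening_singleton ε x ▸ thickening_subset_of_subset ε (singleton_subset_iff.2 hx)).trans
      (thickening_thickening_subset ε δ s)
  have hx' : x ∈ thickening (ε + δ) s := hball (mem_ball_self hε)
  rw [convolution_eq_right' _ hφ fun y hy => by
    rw [indicator_of_mem (hball hy), indicator_of_mem hx', Pi.one_apply, Pi.one_apply]]
  simpa [indicator_of_mem hx'] using hφ1

theorem abs_convolution_indicator_one_le {h : G → ℝ} (hh : Integrable h μ) (s : Set G) (x : G) :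
    |(h ⋆[lsmul ℝ ℝ, μ] s.indicator (1 : G → ℝ)) x| ≤ ∫ t, |h t| ∂μ := by
  rw [convolution_def, ← Real.norm_eq_abs]
  refine norm_integral_le_of_norm_le hh.abs (ae_of_all _ fun t => ?_)
  by_cases ht : x - t ∈ s <;> simp [ht]

end MollifiedIndicator

theorem List.foldr_iterate_induction {α ι : Type*} {T : ι → α → α} {P : α → Prop}
    (hP : ∀ i a, P a → P (T i a)) (m : ι → ℕ) (l : List ι) {a : α} (ha : P a) :
    P (l.foldr (fun i b => (T i)^[m i] b) a) := by
  induction l with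
  | nil => exact ha
  | cons i l ih => exact Iterate.rec P ih (hP i) (m i)

section PartialDerivatives

variable {d : ℕ}

theorem ContDiff.pderivR (i : Fin d) {f : (Fin d → ℝ) → ℝ} (hf : ContDiff ℝ (⊤ : ℕ∞) f) :
    ContDiff ℝ (⊤ : ℕ∞) (pderivR i f) :=
  (apply ℝ ℝ (Pi.single i 1 : Fin d → ℝ)).contDiff.comp
    (hf.fderiv_right (by exact_mod_cast le_top))

theorem HasCompactSupport.pderivR (i : Fin d) {f : (Fin d → ℝ) → ℝ}
    (hf : HasCompactSupport f) : HasCompactSupport (pderivR i f) :=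
  (hf.fderiv ℝ).comp_left (g := fun A : (Fin d → ℝ) →L[ℝ] ℝ => A (Pi.single i 1)) rfl

theorem pderivR_const_smul (i : Fin d) (c : ℝ) (f : (Fin d → ℝ) → ℝ) :
    pderivR i (c • f) = c • pderivR i f := by
  ext y
  simp [pderivR, fderiv_const_smul_field]

theorem pderivR_comp_smul (i : Fin d) (c : ℝ) (f : (Fin d → ℝ) → ℝ) :
    pderivR i (fun y => f (c • y)) = c • fun y => pderivR i f (c • y) := by
  ext y
  simp [pderivR, fderiv_comp_smul]

theorem pderivR_convolution (i : Fin d) {f g : (Fin d → ℝ) → ℝ}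
    (hf : ContDiff ℝ (⊤ : ℕ∞) f) (hfc : HasCompactSupport f) (hg : LocallyIntegrable g) :
    pderivR i (f ⋆[lsmul ℝ ℝ] g) = pderivR i f ⋆[lsmul ℝ ℝ] g := by
  ext x
  have hderiv := hfc.hasFDerivAt_convolution_left (lsmul ℝ ℝ) (hf.of_le (by simp)) hg x
  have hexists : ConvolutionExistsAt (fderiv ℝ f) g x ((lsmul ℝ ℝ).precompL (Fin d → ℝ)) :=
    hfc.fderiv ℝ |>.convolutionExists_left _ (hf.continuous_fderiv (by simp)) hg x
  simp only [pderivR, hderiv.fderiv, convolution_def, integral_apply hexists.integrable]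
  rfl

theorem iterate_pderivR_const_smul (i : Fin d) (k : ℕ) (c : ℝ) (f : (Fin d → ℝ) → ℝ) :
    (pderivR i)^[k] (c • f) = c • (pderivR i)^[k] f :=
  Commute.iterate_left (f := pderivR i) (g := (c • ·)) (pderivR_const_smul i c) k f

theorem iterate_pderivR_semiconj {P : ((Fin d → ℝ) → ℝ) → Prop}
    (hP : ∀ i f, P f → P (pderivR i f))
    {Φ : ((Fin d → ℝ) → ℝ) → (Fin d → ℝ) → ℝ} {c : ℝ}
    (hΦ : ∀ i f, P f → pderivR i (Φ f) = c • Φ (pderivR i f))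
    (i : Fin d) (k : ℕ) {f : (Fin d → ℝ) → ℝ} (hf : P f) :
    (pderivR i)^[k] (Φ f) = c ^ k • Φ ((pderivR i)^[k] f) := by
  induction k generalizing f with
  | zero => simp
  | succ k ih =>
    rw [iterate_succ_apply, iterate_succ_apply, hΦ i f hf, iterate_pderivR_const_smul,
      ih (hP i f hf), smul_smul, pow_succ']

theorem mderivR_semiconj {P : ((Fin d → ℝ) → ℝ) → Prop}
    (hP : ∀ i f, P f → P (pderivR i f))
    {Φ : ((Fin d → ℝ) → ℝ) → (Fin d → ℝ) → ℝ} {c : ℝ}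
    (hΦ : ∀ i f, P f → pderivR i (Φ f) = c • Φ (pderivR i f))
    (m : Fin d → ℕ) {f : (Fin d → ℝ) → ℝ} (hf : P f) :
    mderivR m (Φ f) = c ^ (∑ j, m j) • Φ (mderivR m f) := by
  rw [mderivR, mderivR, ← Finset.sum_map_toList]
  induction (Finset.univ : Finset (Fin d)).toList with
  | nil => simp
  | cons i l ih =>
    rw [List.foldr_cons, List.foldr_cons, ih, iterate_pderivR_const_smul,
      iterate_pderivR_semiconj hP hΦ i (m i) (List.foldr_iterate_induction hP m l hf),
      smul_smul, List.map_cons, List.sum_cons, pow_add, mul_comm]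

theorem ContDiff.mderivR (m : Fin d → ℕ) {f : (Fin d → ℝ) → ℝ}
    (hf : ContDiff ℝ (⊤ : ℕ∞) f) : ContDiff ℝ (⊤ : ℕ∞) (mderivR m f) :=
  List.foldr_iterate_induction (fun i _ h => h.pderivR i) m _ hf

theorem HasCompactSupport.mderivR (m : Fin d → ℕ) {f : (Fin d → ℝ) → ℝ}
    (hf : HasCompactSupport f) : HasCompactSupport (mderivR m f) :=
  List.foldr_iterate_induction (fun i _ h => h.pderivR i) m _ hf

theorem mderivR_convolution (m : Fin d → ℕ) {f g : (Fin d → ℝ) → ℝ}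
    (hf : ContDiff ℝ (⊤ : ℕ∞) f) (hfc : HasCompactSupport f) (hg : LocallyIntegrable g) :
    mderivR m (f ⋆[lsmul ℝ ℝ] g) = mderivR m f ⋆[lsmul ℝ ℝ] g := by
  simpa using mderivR_semiconj (P := fun f => ContDiff ℝ (⊤ : ℕ∞) f ∧ HasCompactSupport f)
    (Φ := (· ⋆[lsmul ℝ ℝ] g)) (c := 1) (fun i _ h => ⟨h.1.pderivR i, h.2.pderivR i⟩)
    (fun i _ h => by rw [one_smul, pderivR_convolution i h.1 h.2 hg]) m ⟨hf, hfc⟩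

theorem mderivR_comp_smul (m : Fin d → ℕ) (c : ℝ) (f : (Fin d → ℝ) → ℝ) :
    mderivR m (fun y => f (c • y)) = c ^ (∑ j, m j) • fun y => mderivR m f (c • y) :=
  mderivR_semiconj (P := fun _ => True) (Φ := fun f y => f (c • y)) (fun _ _ _ => trivial)
    (fun i f _ => pderivR_comp_smul i c f) m trivial

end PartialDerivatives

theorem smul_mem_thickening_smul_iff {𝕜 E : Type*} [NormedField 𝕜] [NormedAddCommGroup E]
    [NormedSpace 𝕜 E] {c : 𝕜} (hc : c ≠ 0) {δ : ℝ} {s : Set E} {x : E} :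
    c • x ∈ thickening (‖c‖ * δ) (c • s) ↔ x ∈ thickening δ s := by
  simp only [mem_thickening_iff, ← image_smul, exists_mem_image, dist_smul₀,
    mul_lt_mul_iff_right₀ (norm_pos_iff.2 hc)]

section Cutoff

variable {d : ℕ}

def unitBump (d : ℕ) : ContDiffBump (0 : Fin d → ℝ) := ⟨1 / 8, 1 / 4, by norm_num, by norm_num⟩

def unitCutoff (Δ : Set (Fin d → ℝ)) : (Fin d → ℝ) → ℝ :=
  (unitBump d).normed volume ⋆[lsmul ℝ ℝ] (thickening (1 / 4 + 1 / 2) Δ).indicator 1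

theorem locallyIntegrable_indicator_one_thickening (r : ℝ) (Δ : Set (Fin d → ℝ)) :
    LocallyIntegrable ((thickening r Δ).indicator (1 : (Fin d → ℝ) → ℝ)) :=
  (locallyIntegrable_const 1).indicator isOpen_thickening.measurableSet

theorem support_unitBump_normed : support ((unitBump d).normed volume) ⊆ ball 0 (1 / 4) :=
  (unitBump d).support_normed_eq.subset

theorem contDiff_unitCutoff (Δ : Set (Fin d → ℝ)) : ContDiff ℝ (⊤ : ℕ∞) (unitCutoff Δ) :=
  (unitBump d).hasCompactSupport_normed.contDiff_convolution_left _
    (unitBump d).contDiff_normed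
    (locallyIntegrable_indicator_one_thickening _ Δ)

theorem unitCutoff_mem_Icc (Δ : Set (Fin d → ℝ)) (y : Fin d → ℝ) : unitCutoff Δ y ∈ Icc 0 1 :=
  convolution_indicator_one_mem_Icc (unitBump d).nonneg_normed (unitBump d).integral_normed y

theorem support_unitCutoff_subset (Δ : Set (Fin d → ℝ)) :
    support (unitCutoff Δ) ⊆ thickening 1 Δ := by
  calc support (unitCutoff Δ)
      ⊆ thickening (1 / 4) (support ((thickening (1 / 4 + 1 / 2) Δ).indicator 1)) :=
        support_convolution_subset_thickening support_unitBump_normed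
    _ ⊆ thickening (1 / 4) (thickening (1 / 4 + 1 / 2) Δ) :=
        thickening_subset_of_subset _ support_indicator_subset
    _ ⊆ thickening 1 Δ := by
        convert thickening_thickening_subset _ _ Δ using 2
        norm_num

theorem unitCutoff_eqOn_one (Δ : Set (Fin d → ℝ)) :
    EqOn (unitCutoff Δ) 1 (thickening (1 / 2) Δ) :=
  convolution_indicator_one_eqOn_one (by norm_num) support_unitBump_normed
    (unitBump d).integral_normed

theorem abs_mderivR_unitCutoff_le (Δ : Set (Fin d → ℝ)) (m : Fin d → ℕ) (y : Fin d → ℝ) :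
    |mderivR m (unitCutoff Δ) y| ≤ ∫ t, |mderivR m ((unitBump d).normed volume) t| := by
  rw [unitCutoff, mderivR_convolution m (unitBump d).contDiff_normed
    (unitBump d).hasCompactSupport_normed
    (locallyIntegrable_indicator_one_thickening _ Δ)]
  exact abs_convolution_indicator_one_le
    (((unitBump d).contDiff_normed.mderivR m).continuous.integrable_of_hasCompactSupport
      ((unitBump d).hasCompactSupport_normed.mderivR m)) _ y

def cutoff (R : ℝ) (Δ : Set (Fin d → ℝ)) : (Fin d → ℝ) → ℝ :=
  fun y => unitCutoff (R⁻¹ • Δ) (R⁻¹ • y)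

theorem inv_smul_mem_thickening_inv_smul_iff {R : ℝ} (hR : 0 < R) (r : ℝ)
    (Δ : Set (Fin d → ℝ)) (y : Fin d → ℝ) :
    R⁻¹ • y ∈ thickening r (R⁻¹ • Δ) ↔ y ∈ thickening (R * r) Δ := by
  have h := smul_mem_thickening_smul_iff (inv_ne_zero hR.ne') (δ := R * r) (s := Δ) (x := y)
  rwa [norm_inv, Real.norm_of_nonneg hR.le, inv_mul_cancel_left₀ hR.ne'] at h

theorem contDiff_cutoff (R : ℝ) (Δ : Set (Fin d → ℝ)) : ContDiff ℝ (⊤ : ℕ∞) (cutoff R Δ) :=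
  (contDiff_unitCutoff _).comp (contDiff_id.const_smul R⁻¹)

theorem cutoff_mem_Icc (R : ℝ) (Δ : Set (Fin d → ℝ)) (y : Fin d → ℝ) : cutoff R Δ y ∈ Icc 0 1 :=
  unitCutoff_mem_Icc _ _

theorem support_cutoff_subset {R : ℝ} (hR : 0 < R) (Δ : Set (Fin d → ℝ)) :
    support (cutoff R Δ) ⊆ thickening R Δ := fun y hy => by
  simpa using (inv_smul_mem_thickening_inv_smul_iff hR 1 Δ y).1 (support_unitCutoff_subset _ hy)

theorem cutoff_eqOn_one {R : ℝ} (hR : 0 < R) (Δ : Set (Fin d → ℝ)) :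
    EqOn (cutoff R Δ) 1 (thickening (R / 2) Δ) := fun y hy =>
  unitCutoff_eqOn_one _ <|
    (inv_smul_mem_thickening_inv_smul_iff hR _ Δ y).2 (by simpa [div_eq_mul_inv] using hy)

theorem abs_mderivR_cutoff_le {R : ℝ} (hR : 0 < R) (Δ : Set (Fin d → ℝ)) (m : Fin d → ℕ)
    (y : Fin d → ℝ) :
    |mderivR m (cutoff R Δ) y|
      ≤ (∫ t, |mderivR m ((unitBump d).normed volume) t|) / R ^ (∑ j, m j) := by
  unfold cutoff
  rw [mderivR_comp_smul, Pi.smul_apply, smul_eq_mul, abs_mul, abs_pow, abs_inv,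
    abs_of_pos hR, inv_pow, inv_mul_eq_div]
  gcongr
  exact abs_mderivR_unitCutoff_le _ m _

end Cutoff

theorem finite_setOf_sum_le (d n : ℕ) : {m : Fin d → ℕ | ∑ j, m j ≤ n}.Finite :=
  (Set.Finite.pi fun _ => finite_Iic n).subset fun _ hm j _ =>
    (Finset.single_le_sum (fun _ _ => Nat.zero_le _) (Finset.mem_univ j)).trans hm

/-- **Cut-off lemma with factorial derivative bounds.**
For every `n` (and dimension `d`) there is a constant `C > 0` such that for all `R > 0`
and nonempty `Δ ⊆ ℝ^d` there is a smooth cut-off `χ` with `0 ≤ χ ≤ 1`, support inside the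
`R`-neighborhood `Δ_R`, `χ ≡ 1` on `Δ_{R/2}`, and
`sup |∂^m χ| ≤ C (|m|₁ + 2)! / R^{|m|₁}` for every multi-index `m` with `|m|₁ ≤ n`. -/
theorem cutoff_lemma (d n : ℕ) :
    ∃ C : ℝ, 0 < C ∧
      ∀ R : ℝ, 0 < R → ∀ Δ : Set (Fin d → ℝ), Δ.Nonempty →
        ∃ χ : (Fin d → ℝ) → ℝ, ContDiff ℝ (⊤ : ℕ∞) χ ∧ (∀ y, χ y ∈ Set.Icc (0 : ℝ) 1) ∧
          Function.support χ ⊆ Metric.thickening R Δ ∧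
          Set.EqOn χ 1 (Metric.thickening (R / 2) Δ) ∧
          ∀ m : Fin d → ℕ, (∑ j, m j) ≤ n →
            ∀ y, |mderivR m χ y| ≤ C * (Nat.factorial ((∑ j, m j) + 2)) / R ^ (∑ j, m j) := by
  obtain ⟨C₀, hC₀⟩ := ((finite_setOf_sum_le d n).image
    fun m => ∫ t, |mderivR m ((unitBump d).normed volume) t|).bddAbove
  refine ⟨max C₀ 1, by positivity, fun R hR Δ _ => ⟨cutoff R Δ, contDiff_cutoff R Δ,
    cutoff_mem_Icc R Δ, support_cutoff_subset hR Δ, cutoff_eqOn_one hR Δ, fun m hm y => ?_⟩⟩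
  refine (abs_mderivR_cutoff_le hR Δ m y).trans ?_
  gcongr
  calc (∫ t, |mderivR m ((unitBump d).normed volume) t|) ≤ max C₀ 1 :=
        (hC₀ ⟨m, hm, rfl⟩).trans (le_max_left _ _)
    _ ≤ max C₀ 1 * ((∑ j, m j) + 2).factorial :=
        le_mul_of_one_le_right (by positivity) (mod_cast Nat.factorial_pos _)
end
end

section
/- Lipschitz bound for infinite compositions. Let (𝒳, ‖·‖) be a real or complex normed vector space, (ℒ_j)_{j≥0} a sequence of invertible bounded linear operators on 𝒳, and (g_j)_{j≥0} a sequence of Lipschitz continuous self-maps of 𝒳. Define l_j := Lip(ℒ_j∘(g_j − id)∘ℒ₀^{−1}), G₀ := id, G_{j+1} := g₀∘g₁∘⋯∘g_j, and δ := sup_{j≥0} ‖ℒ_jℒ_{j+1}^{−1}‖. If δ < ∞ and Σ_{j=0}^∞ δ^j l_j ≤ 1/2, then every G_j is Lipschitz continuous and, for every j ≥ 0, Lip(ℒ₀∘(G_{j+1} − id)∘ℒ₀^{−1}) ≤ 2 Σ_{k=0}^j δ^k l_k. -/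
set_option autoImplicit false

noncomputable section

/-- The composition `G_0 = id`, `G_{j+1} = g_0 ∘ g_1 ∘ ⋯ ∘ g_j`. -/
def comps {X : Type*} (g : ℕ → X → X) : ℕ → X → X
  | 0 => id
  | j + 1 => comps g j ∘ g j

/-- **Lipschitz bound for infinite compositions.**
Let `(ℒ_j)` be invertible bounded operators and `(g_j)` Lipschitz self-maps of a normed
space `𝒳`, let `l_j` bound the Lipschitz constant of `ℒ_j ∘ (g_j − id) ∘ ℒ₀⁻¹` and
`δ ≥ sup_j ‖ℒ_j ℒ_{j+1}⁻¹‖`.  If `Σ δ^j l_j ≤ 1/2` then every `G_j` is Lipschitz and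
`Lip (ℒ₀ ∘ (G_{j+1} − id) ∘ ℒ₀⁻¹) ≤ 2 Σ_{k ≤ j} δ^k l_k`. -/
theorem lipschitz_infinite_composition
    {X : Type*} [NormedAddCommGroup X] [NormedSpace ℝ X]
    (L : ℕ → X ≃L[ℝ] X) (g : ℕ → X → X)
    (hg : ∀ j, ∃ K : NNReal, LipschitzWith K (g j))
    (l : ℕ → ℝ) (hl : ∀ j, 0 ≤ l j)
    (hlj : ∀ j, ∀ x y : X,
      ‖L j (g j ((L 0).symm x) - (L 0).symm x) - L j (g j ((L 0).symm y) - (L 0).symm y)‖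
        ≤ l j * ‖x - y‖)
    (δ : ℝ) (hδ0 : 0 ≤ δ) (hδ : ∀ j, ∀ x : X, ‖L j ((L (j + 1)).symm x)‖ ≤ δ * ‖x‖)
    (hsum : Summable fun j => δ ^ j * l j) (hhalf : (∑' j, δ ^ j * l j) ≤ 1 / 2) :
    (∀ j, ∃ K : NNReal, LipschitzWith K (comps g j)) ∧
      ∀ j, ∀ x y : X,
        ‖L 0 (comps g (j + 1) ((L 0).symm x)) - x -
            (L 0 (comps g (j + 1) ((L 0).symm y)) - y)‖
          ≤ (2 * ∑ k ∈ Finset.range (j + 1), δ ^ k * l k) * ‖x - y‖ := by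
  have hterm : ∀ k, 0 ≤ δ ^ k * l k := fun k => mul_nonneg (pow_nonneg hδ0 k) (hl k)
  have hS1 : ∀ j, 2 * ∑ k ∈ Finset.range (j + 1), δ ^ k * l k ≤ 1 := by
    intro j
    have h := Summable.sum_le_tsum (Finset.range (j + 1)) (fun k _ => hterm k) hsum
    linarith
  have hSnn : ∀ j, 0 ≤ ∑ k ∈ Finset.range (j + 1), δ ^ k * l k :=
    fun j => Finset.sum_nonneg fun k _ => hterm k
  -- key norm estimate : ‖L 0 z‖ ≤ δ^j ‖L j z‖
  have hA : ∀ j (z : X), ‖L 0 z‖ ≤ δ ^ j * ‖L j z‖ := by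
    intro j
    induction j with
    | zero => intro z; simp
    | succ j ih =>
      intro z
      have h1 : ‖L j z‖ ≤ δ * ‖L (j + 1) z‖ := by
        have := hδ j (L (j + 1) z)
        simpa using this
      calc ‖L 0 z‖ ≤ δ ^ j * ‖L j z‖ := ih z
        _ ≤ δ ^ j * (δ * ‖L (j + 1) z‖) :=
            mul_le_mul_of_nonneg_left h1 (pow_nonneg hδ0 j)
        _ = δ ^ (j + 1) * ‖L (j + 1) z‖ := by ring
  -- Lipschitz bound on the conjugated perturbation
  have hphi : ∀ j (x y : X),
      ‖L 0 (g j ((L 0).symm x) - (L 0).symm x) - L 0 (g j ((L 0).symm y) - (L 0).symm y)‖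
        ≤ δ ^ j * l j * ‖x - y‖ := by
    intro j x y
    set w : X := (g j ((L 0).symm x) - (L 0).symm x) - (g j ((L 0).symm y) - (L 0).symm y)
      with hw
    have h1 : L 0 (g j ((L 0).symm x) - (L 0).symm x)
        - L 0 (g j ((L 0).symm y) - (L 0).symm y) = L 0 w := by
      simp [hw, map_sub]
    rw [h1]
    have h2 : ‖L j w‖ ≤ l j * ‖x - y‖ := by
      have := hlj j x y
      simpa [hw, map_sub] using this
    calc ‖L 0 w‖ ≤ δ ^ j * ‖L j w‖ := hA j w
      _ ≤ δ ^ j * (l j * ‖x - y‖) :=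
          mul_le_mul_of_nonneg_left h2 (pow_nonneg hδ0 j)
      _ = δ ^ j * l j * ‖x - y‖ := by ring
  constructor
  · intro j
    induction j with
    | zero => exact ⟨1, by simpa [comps] using LipschitzWith.id⟩
    | succ j ih =>
      obtain ⟨K, hK⟩ := ih
      obtain ⟨K', hK'⟩ := hg j
      exact ⟨K * K', hK.comp hK'⟩
  · intro j
    induction j with
    | zero =>
      intro x y
      have hx : x = L 0 ((L 0).symm x) := ((L 0).apply_symm_apply x).symm
      have hy : y = L 0 ((L 0).symm y) := ((L 0).apply_symm_apply y).symm
      have heq : L 0 (comps g 1 ((L 0).symm x)) - x - (L 0 (comps g 1 ((L 0).symm y)) - y)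
          = L 0 (g 0 ((L 0).symm x) - (L 0).symm x)
            - L 0 (g 0 ((L 0).symm y) - (L 0).symm y) := by
        rw [show comps g 1 = fun z => g 0 z from rfl]
        conv_lhs => rw [hx, hy]
        simp [map_sub]
      rw [heq]
      have h := hphi 0 x y
      have hln : 0 ≤ l 0 * ‖x - y‖ := mul_nonneg (hl 0) (norm_nonneg _)
      have hsum0 : (∑ k ∈ Finset.range (0 + 1), δ ^ k * l k) = l 0 := by simp
      rw [hsum0]
      simp only [pow_zero, one_mul] at h
      nlinarith
    | succ j ih =>
      intro x y
      set x' : X := L 0 (g (j + 1) ((L 0).symm x)) with hx'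
      set y' : X := L 0 (g (j + 1) ((L 0).symm y)) with hy'
      have hsx : (L 0).symm x' = g (j + 1) ((L 0).symm x) := by
        rw [hx']; exact (L 0).symm_apply_apply _
      have hsy : (L 0).symm y' = g (j + 1) ((L 0).symm y) := by
        rw [hy']; exact (L 0).symm_apply_apply _
      have hcx : comps g (j + 2) ((L 0).symm x) = comps g (j + 1) ((L 0).symm x') := by
        rw [hsx]; rfl
      have hcy : comps g (j + 2) ((L 0).symm y) = comps g (j + 1) ((L 0).symm y') := by
        rw [hsy]; rfl
      set a : X := L 0 (comps g (j + 1) ((L 0).symm x')) - x'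
          - (L 0 (comps g (j + 1) ((L 0).symm y')) - y') with ha
      set b : X := (x' - x) - (y' - y) with hb
      have hsplit : L 0 (comps g (j + 2) ((L 0).symm x)) - x
          - (L 0 (comps g (j + 2) ((L 0).symm y)) - y) = a + b := by
        rw [hcx, hcy, ha, hb]; abel
      -- bound on b
      have hbbound : ‖b‖ ≤ δ ^ (j + 1) * l (j + 1) * ‖x - y‖ := by
        have hbx : b = L 0 (g (j + 1) ((L 0).symm x) - (L 0).symm x)
            - L 0 (g (j + 1) ((L 0).symm y) - (L 0).symm y) := by
          rw [hb, hx', hy']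
          have hx0 : x = L 0 ((L 0).symm x) := ((L 0).apply_symm_apply x).symm
          have hy0 : y = L 0 ((L 0).symm y) := ((L 0).apply_symm_apply y).symm
          conv_lhs => rw [hx0, hy0]
          simp [map_sub]
        rw [hbx]; exact hphi (j + 1) x y
      -- bound on x' - y'
      have hxy' : ‖x' - y'‖ ≤ ‖b‖ + ‖x - y‖ := by
        have : x' - y' = b + (x - y) := by rw [hb]; abel
        rw [this]; exact norm_add_le _ _
      have habound : ‖a‖ ≤ (2 * ∑ k ∈ Finset.range (j + 1), δ ^ k * l k) * ‖x' - y'‖ :=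
        ih x' y'
      rw [hsplit, Finset.sum_range_succ]
      have htri : ‖a + b‖ ≤ ‖a‖ + ‖b‖ := norm_add_le _ _
      have hc : 0 ≤ δ ^ (j + 1) * l (j + 1) := hterm (j + 1)
      have hs1 := hS1 j
      have hsnn := hSnn j
      have ht : 0 ≤ ‖x - y‖ := norm_nonneg _
      nlinarith [mul_nonneg hc ht, norm_nonneg b, norm_nonneg a]
end
end

section
/- Lebesgue measure distortion under near-identity Lipschitz maps. Let A ⊂ ℝ^d be a nonempty Lebesgue-measurable set and f : A → ℝ^d a Lipschitz continuous map such that the Lipschitz constant of f − id on A, ‖f − id‖_{Lip,A} := sup_{x≠y∈A} |f(x)−f(y)−(x−y)| / |x−y|, is at most δ. Then |meas(f(A)) − meas(A)| ≤ ((1+δ)^d − 1)·meas(A). -/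
set_option autoImplicit false

open MeasureTheory
open scoped ENNReal NNReal

lemma vol_image_le_aux {d : ℕ} (A : Set (Fin d → ℝ)) (f : (Fin d → ℝ) → Fin d → ℝ)
    {K : ℝ≥0} (h : LipschitzOnWith K f A) :
    volume (f '' A) ≤ (K : ℝ≥0∞) ^ d * volume A := by
  have h2 := h.hausdorffMeasure_image_le (d := (d : ℝ)) (by positivity)
  have h3 : (MeasureTheory.Measure.hausdorffMeasure (d : ℝ) : Measure (Fin d → ℝ)) = volume := by
    simpa using hausdorffMeasure_pi_real (ι := Fin d)
  rw [h3] at h2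
  simpa [ENNReal.rpow_natCast] using h2

lemma two_le_aux (δ : ℝ) (hδ0 : 0 ≤ δ) (hδ1 : δ ≤ 1) : ∀ d : ℕ, 2 ≤ (1 - δ) ^ d + (1 + δ) ^ d
  | 0 => by norm_num
  | (d + 1) => by
      have ih := two_le_aux δ hδ0 hδ1 d
      have h1 : (0 : ℝ) ≤ 1 - δ := by linarith
      have hqp : (1 - δ) ^ d ≤ (1 + δ) ^ d := pow_le_pow_left₀ h1 (by linarith) d
      have h2 : 0 ≤ δ * ((1 + δ) ^ d - (1 - δ) ^ d) :=
        mul_nonneg hδ0 (by linarith)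
      have e1 : (1 - δ) ^ (d + 1) = (1 - δ) * (1 - δ) ^ d := by ring
      have e2 : (1 + δ) ^ (d + 1) = (1 + δ) * (1 + δ) ^ d := by ring
      nlinarith

/-- **Lebesgue measure distortion under near-identity Lipschitz maps.**
If `f : A → ℝ^d` is such that `f − id` has Lipschitz constant at most `δ` on the
measurable set `A`, then `|meas (f '' A) − meas A| ≤ ((1+δ)^d − 1) · meas A`
(stated as the two corresponding one-sided inequalities in `ℝ≥0∞`). -/
theorem measure_distortion_near_identity (d : ℕ) (A : Set (Fin d → ℝ)) (hA : A.Nonempty)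
    (hmeas : MeasurableSet A) (f : (Fin d → ℝ) → Fin d → ℝ) (δ : ℝ) (hδ : 0 ≤ δ)
    (hLip : ∀ x ∈ A, ∀ y ∈ A, ‖f x - x - (f y - y)‖ ≤ δ * ‖x - y‖) :
    volume (f '' A) ≤ volume A + ENNReal.ofReal ((1 + δ) ^ d - 1) * volume A ∧
      volume A ≤ volume (f '' A) + ENNReal.ofReal ((1 + δ) ^ d - 1) * volume A := by
  have h1δ : (0:ℝ) ≤ 1 + δ := by linarith
  set c : ℝ≥0∞ := ENNReal.ofReal ((1 + δ) ^ d - 1) with hc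
  -- upper bound
  have hupper : volume (f '' A) ≤ volume A + c * volume A := by
    have hlip : LipschitzOnWith (Real.toNNReal (1 + δ)) f A := by
      apply LipschitzOnWith.of_dist_le_mul
      intro x hx y hy
      have h := hLip x hx y hy
      rw [dist_eq_norm, dist_eq_norm, Real.coe_toNNReal _ h1δ]
      have : f x - f y = (f x - x - (f y - y)) + (x - y) := by abel
      rw [this]
      calc ‖(f x - x - (f y - y)) + (x - y)‖ ≤ ‖f x - x - (f y - y)‖ + ‖x - y‖ :=
            norm_add_le _ _
        _ ≤ δ * ‖x - y‖ + ‖x - y‖ := by linarith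
        _ = (1 + δ) * ‖x - y‖ := by ring
    have h2 := vol_image_le_aux A f hlip
    have hco : ((Real.toNNReal (1 + δ) : ℝ≥0) : ℝ≥0∞) ^ d = 1 + c := by
      have : ((Real.toNNReal (1 + δ) : ℝ≥0) : ℝ≥0∞) = ENNReal.ofReal (1 + δ) := rfl
      rw [this, ← ENNReal.ofReal_pow h1δ, hc]
      rw [show (1 + δ) ^ d = 1 + ((1 + δ) ^ d - 1) by ring,
        ENNReal.ofReal_add (by norm_num) (by nlinarith [one_le_pow₀ (by linarith : (1:ℝ) ≤ 1 + δ) (n := d)])]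
      simp
    calc volume (f '' A) ≤ ((Real.toNNReal (1 + δ) : ℝ≥0) : ℝ≥0∞) ^ d * volume A := h2
      _ = volume A + c * volume A := by rw [hco, add_mul, one_mul]
  refine ⟨hupper, ?_⟩
  -- lower bound
  rcases eq_or_ne d 0 with hd | hd
  · subst hd
    have hAu : A = Set.univ := hA.eq_univ
    have hfu : f '' A = Set.univ := (hA.image f).eq_univ
    rw [hfu, hAu]
    exact le_add_right le_rfl
  by_cases hδ1 : 1 ≤ δ
  · -- trivial branch: (1+δ)^d - 1 ≥ 1
    have hd1 : 1 ≤ d := Nat.one_le_iff_ne_zero.mpr hd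
    have h2 : (2:ℝ) ≤ (1 + δ) ^ d := by
      calc (2:ℝ) = 2 ^ 1 := by norm_num
        _ ≤ 2 ^ d := pow_le_pow_right₀ (by norm_num) hd1
        _ ≤ (1 + δ) ^ d := pow_le_pow_left₀ (by norm_num) (by linarith) d
    have h1c : 1 ≤ c := ENNReal.one_le_ofReal.2 (by linarith)
    calc volume A = 1 * volume A := (one_mul _).symm
      _ ≤ c * volume A := mul_le_mul' h1c le_rfl
      _ ≤ volume (f '' A) + c * volume A := le_add_self
  · push_neg at hδ1
    have h1δ' : (0:ℝ) < 1 - δ := by linarith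
    -- lower Lipschitz bound
    have hanti : ∀ x ∈ A, ∀ y ∈ A, (1 - δ) * ‖x - y‖ ≤ ‖f x - f y‖ := by
      intro x hx y hy
      have h := hLip x hx y hy
      have : x - y = (f x - f y) - (f x - x - (f y - y)) := by abel
      have h2 : ‖x - y‖ ≤ ‖f x - f y‖ + δ * ‖x - y‖ := by
        calc ‖x - y‖ = ‖(f x - f y) - (f x - x - (f y - y))‖ := by rw [← this]
          _ ≤ ‖f x - f y‖ + ‖f x - x - (f y - y)‖ := norm_sub_le _ _
          _ ≤ ‖f x - f y‖ + δ * ‖x - y‖ := by linarith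
      linarith
    have hinj : Set.InjOn f A := by
      intro x hx y hy hxy
      have h := hanti x hx y hy
      rw [hxy, sub_self, norm_zero] at h
      have : ‖x - y‖ = 0 := le_antisymm (by nlinarith [norm_nonneg (x - y)]) (norm_nonneg _)
      exact sub_eq_zero.mp (norm_eq_zero.mp this)
    -- the inverse map is Lipschitz on `f '' A`
    set g := Function.invFunOn f A with hg
    have hgf : ∀ x ∈ A, g (f x) = x := fun x hx => hinj.leftInvOn_invFunOn hx
    have hgimg : g '' (f '' A) = A := hinj.invFunOn_image Set.Subset.rfl
    have hKinv : (0:ℝ) ≤ (1 - δ)⁻¹ := by positivity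
    have hglip : LipschitzOnWith (Real.toNNReal ((1 - δ)⁻¹)) g (f '' A) := by
      apply LipschitzOnWith.of_dist_le_mul
      rintro u ⟨x, hx, rfl⟩ v ⟨y, hy, rfl⟩
      rw [hgf x hx, hgf y hy, dist_eq_norm, dist_eq_norm,
        Real.coe_toNNReal _ hKinv, le_inv_mul_iff₀ h1δ']
      have h := hanti x hx y hy
      linarith
    have h2 := vol_image_le_aux (f '' A) g hglip
    rw [hgimg] at h2
    -- multiply by (1-δ)^d
    have hlow : ENNReal.ofReal ((1 - δ) ^ d) * volume A ≤ volume (f '' A) := by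
      have hco : ((Real.toNNReal ((1 - δ)⁻¹) : ℝ≥0) : ℝ≥0∞) ^ d = ENNReal.ofReal (((1 - δ) ^ d)⁻¹) := by
        have : ((Real.toNNReal ((1 - δ)⁻¹) : ℝ≥0) : ℝ≥0∞) = ENNReal.ofReal ((1 - δ)⁻¹) := rfl
        rw [this, ← ENNReal.ofReal_pow hKinv, inv_pow]
      rw [hco] at h2
      calc ENNReal.ofReal ((1 - δ) ^ d) * volume A
          ≤ ENNReal.ofReal ((1 - δ) ^ d) * (ENNReal.ofReal (((1 - δ) ^ d)⁻¹) * volume (f '' A)) :=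
            mul_le_mul' le_rfl h2
        _ = (ENNReal.ofReal ((1 - δ) ^ d) * ENNReal.ofReal (((1 - δ) ^ d)⁻¹)) * volume (f '' A) := by
            rw [mul_assoc]
        _ = volume (f '' A) := by
            rw [← ENNReal.ofReal_mul (by positivity), mul_inv_cancel₀ (by positivity)]
            simp
    -- combine
    have hkey : (1:ℝ≥0∞) ≤ ENNReal.ofReal ((1 - δ) ^ d) + c := by
      rw [hc, ← ENNReal.ofReal_add (by positivity)
        (by nlinarith [one_le_pow₀ (by linarith : (1:ℝ) ≤ 1 + δ) (n := d)])]
      apply ENNReal.one_le_ofReal.2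
      have := two_le_aux δ hδ (le_of_lt hδ1) d
      linarith
    calc volume A = 1 * volume A := (one_mul _).symm
      _ ≤ (ENNReal.ofReal ((1 - δ) ^ d) + c) * volume A := mul_le_mul' hkey le_rfl
      _ = ENNReal.ofReal ((1 - δ) ^ d) * volume A + c * volume A := by rw [add_mul]
      _ ≤ volume (f '' A) + c * volume A := add_le_add hlow le_rfl
end

section
/- Gram-type integral identity and Hölder convexity inequality. Let x₁,…,x_n ∈ ℝ^d. Then: (i) for all β, a₁,…,a_n > 0, Σ_{1≤i,j≤n} ⟨x_i, x_j⟩/(a_i + a_j)^β = (1/Γ(β)) ∫₀^∞ |Σ_{i=1}^n e^{−a_i t} x_i|₂² t^{β−1} dt ≥ 0; (ii) for every λ = (λ₁,…,λ_n) with λ_i ∈ [0,1] and Σλ_i = 1, and every 0 < a ≤ 1, Σ_{1≤i,j≤n} λ_iλ_j |x_i − x_j|₂^{2a} ≤ Σ_{1≤i,j≤n} λ_iλ_j (|x_i|₂² + |x_j|₂²)^a ≤ 2 Σ_{i=1}^n λ_i |x_i|₂^{2a}. -/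
/-!
(i) Expanding the square, `‖Σ e^{-aᵢt} xᵢ‖² = Σ ⟪xᵢ, xⱼ⟫ e^{-(aᵢ+aⱼ)t}`, and each term integrates
against `t^{β-1}` to `Γ(β) ⟪xᵢ, xⱼ⟫ / (aᵢ+aⱼ)^β`.

(ii) For `0 < a < 1` we have `u^a = K_a⁻¹ ∫₀^∞ (1 - e^{-ut}) t^{-a-1} dt` with `K_a > 0`, so a
weighted sum of `a`-th powers is monotone in the weighted sum of exponentials `Σ w e^{-ut}`. This
reduces the first inequality to `Σ λᵢλⱼ e^{-t(|xᵢ|²+|xⱼ|²)} ≤ Σ λᵢλⱼ e^{-t|xᵢ-xⱼ|²}` for every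
`t ≥ 0`; at `a = 1` it is the identity
`Σ λᵢλⱼ |xᵢ-xⱼ|² = Σ λᵢλⱼ (|xᵢ|²+|xⱼ|²) - 2 |Σ λᵢxᵢ|²`. The second inequality is the
subadditivity `(u+v)^a ≤ u^a + v^a`.
-/

set_option autoImplicit false

open scoped RealInnerProductSpace

open MeasureTheory Real Set

section Gram

variable {ι E : Type*} [Fintype ι] [NormedAddCommGroup E] [InnerProductSpace ℝ E]

lemma norm_sum_smul_sq (f : ι → ℝ) (x : ι → E) :
    ‖∑ i, f i • x i‖ ^ 2 = ∑ i, ∑ j, f i * f j * ⟪x i, x j⟫ := by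
  rw [← real_inner_self_eq_norm_sq, sum_inner]
  simp only [inner_sum, real_inner_smul_left, real_inner_smul_right]
  exact Finset.sum_congr rfl fun i _ ↦ Finset.sum_congr rfl fun j _ ↦ by ring

lemma integral_exp_neg_mul_mul_rpow {β c : ℝ} (hβ : 0 < β) (hc : 0 < c) :
    ∫ t in Ioi 0, exp (-(c * t)) * t ^ (β - 1) = Gamma β / c ^ β := by
  simp_rw [mul_comm (exp _)]
  rw [integral_rpow_mul_exp_neg_mul_Ioi hβ hc, one_div, inv_rpow hc.le, inv_mul_eq_div]

lemma integrableOn_exp_neg_mul_mul_rpow {β c : ℝ} (hβ : 0 < β) (hc : 0 < c) :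
    IntegrableOn (fun t ↦ exp (-(c * t)) * t ^ (β - 1)) (Ioi 0) :=
  Integrable.of_integral_ne_zero <| by
    rw [integral_exp_neg_mul_mul_rpow hβ hc]
    exact (div_pos (Gamma_pos_of_pos hβ) (rpow_pos_of_pos hc β)).ne'

theorem sum_inner_div_rpow_eq_integral (x : ι → E) {β : ℝ} {a : ι → ℝ} (hβ : 0 < β)
    (ha : ∀ i, 0 < a i) :
    ∑ i, ∑ j, ⟪x i, x j⟫ / (a i + a j) ^ β
      = (1 / Gamma β) * ∫ t in Ioi 0, ‖∑ i, exp (-(a i) * t) • x i‖ ^ 2 * t ^ (β - 1) := by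
  have hpos : ∀ i j, 0 < a i + a j := fun i j ↦ add_pos (ha i) (ha j)
  have hint : ∀ i j, IntegrableOn
      (fun t ↦ ⟪x i, x j⟫ * (exp (-((a i + a j) * t)) * t ^ (β - 1))) (Ioi 0) :=
    fun i j ↦ (integrableOn_exp_neg_mul_mul_rpow hβ (hpos i j)).const_mul _
  have hexpand : ∀ t, ‖∑ i, exp (-(a i) * t) • x i‖ ^ 2 * t ^ (β - 1)
      = ∑ i, ∑ j, ⟪x i, x j⟫ * (exp (-((a i + a j) * t)) * t ^ (β - 1)) := fun t ↦ by
    simp only [norm_sum_smul_sq, Finset.sum_mul]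
    refine Finset.sum_congr rfl fun i _ ↦ Finset.sum_congr rfl fun j _ ↦ ?_
    rw [show -((a i + a j) * t) = -(a i) * t + -(a j) * t by ring, exp_add]
    ring
  simp_rw [hexpand]
  rw [integral_finsetSum _ fun i _ ↦ integrable_finsetSum _ fun j _ ↦ hint i j, Finset.mul_sum]
  refine Finset.sum_congr rfl fun i _ ↦ ?_
  rw [integral_finsetSum _ fun j _ ↦ hint i j, Finset.mul_sum]
  refine Finset.sum_congr rfl fun j _ ↦ ?_
  rw [integral_const_mul, integral_exp_neg_mul_mul_rpow hβ (hpos i j)]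
  field_simp [(Gamma_pos_of_pos hβ).ne']

theorem sum_inner_div_rpow_nonneg (x : ι → E) {β : ℝ} {a : ι → ℝ} (hβ : 0 < β)
    (ha : ∀ i, 0 < a i) : 0 ≤ ∑ i, ∑ j, ⟪x i, x j⟫ / (a i + a j) ^ β := by
  rw [sum_inner_div_rpow_eq_integral x hβ ha]
  exact mul_nonneg (one_div_nonneg.2 (Gamma_pos_of_pos hβ).le)
    (setIntegral_nonneg measurableSet_Ioi fun t ht ↦
      mul_nonneg (sq_nonneg _) (rpow_nonneg (le_of_lt ht) _))

end Gram

section Bernstein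

variable {a : ℝ}

noncomputable def bernsteinConst (a : ℝ) : ℝ := ∫ t in Ioi 0, (1 - exp (-t)) * t ^ (-a - 1)

lemma integrableOn_one_sub_exp_neg_mul_mul_rpow (ha : 0 < a) (ha1 : a < 1) {c : ℝ}
    (hc : 0 ≤ c) : IntegrableOn (fun t ↦ (1 - exp (-(c * t))) * t ^ (-a - 1)) (Ioi 0) := by
  have hmeas : ∀ s : Set ℝ, AEStronglyMeasurable
      (fun t ↦ (1 - exp (-(c * t))) * t ^ (-a - 1)) (volume.restrict s) := fun _ ↦ by
    fun_prop
  have hbound : ∀ t : ℝ, 0 < t → ‖(1 - exp (-(c * t))) * t ^ (-a - 1)‖ ≤ c * t ^ (-a) ∧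
      ‖(1 - exp (-(c * t))) * t ^ (-a - 1)‖ ≤ t ^ (-a - 1) := fun t ht ↦ by
    have hexp : exp (-(c * t)) ≤ 1 := exp_le_one_iff.2 (neg_nonpos.2 (mul_nonneg hc ht.le))
    have hlin : 1 - c * t ≤ exp (-(c * t)) := by linarith [add_one_le_exp (-(c * t))]
    have hpow : t ^ (-a) = t * t ^ (-a - 1) := by
      rw [← rpow_one_add' ht.le (by linarith)]; ring_nf
    rw [norm_mul, Real.norm_of_nonneg (sub_nonneg.2 hexp),
      Real.norm_of_nonneg (rpow_nonneg ht.le _), hpow, ← mul_assoc]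
    constructor
    · exact mul_le_mul_of_nonneg_right (by linarith) (rpow_nonneg ht.le _)
    · exact mul_le_of_le_one_left (rpow_nonneg ht.le _) (by linarith [exp_pos (-(c * t))])
  rw [← Ioc_union_Ioi_eq_Ioi zero_le_one]
  refine IntegrableOn.union ?_ ?_
  · have hdom : IntegrableOn (fun t : ℝ ↦ c * t ^ (-a)) (Ioc 0 1) :=
      ((intervalIntegrable_iff_integrableOn_Ioc_of_le zero_le_one).1
        (intervalIntegral.intervalIntegrable_rpow' (r := -a) (by linarith))).const_mul c
    refine hdom.mono' (hmeas _) ?_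
    filter_upwards [ae_restrict_mem measurableSet_Ioc] with t ht using (hbound t ht.1).1
  · refine (integrableOn_Ioi_rpow_of_lt (a := -a - 1) (by linarith) one_pos).mono' (hmeas _) ?_
    filter_upwards [ae_restrict_mem measurableSet_Ioi] with t ht
      using (hbound t (one_pos.trans ht)).2

lemma bernsteinConst_pos (ha : 0 < a) (ha1 : a < 1) : 0 < bernsteinConst a := by
  have hint := integrableOn_one_sub_exp_neg_mul_mul_rpow ha ha1 zero_le_one
  simp only [one_mul] at hint
  have hpos : ∀ t : ℝ, 0 < t → 0 < (1 - exp (-t)) * t ^ (-a - 1) := fun t ht ↦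
    mul_pos (sub_pos.2 (exp_lt_one_iff.2 (neg_lt_zero.2 ht))) (rpow_pos_of_pos ht _)
  rw [bernsteinConst, setIntegral_pos_iff_support_of_nonneg_ae ?_ hint]
  · refine lt_of_lt_of_le ?_
      (measure_mono fun t (ht : t ∈ Set.Ioi (0 : ℝ)) ↦ ⟨(hpos t ht).ne', ht⟩)
    simp
  · filter_upwards [ae_restrict_mem measurableSet_Ioi] with t ht using (hpos t ht).le

lemma integral_one_sub_exp_neg_mul_mul_rpow (ha : 0 < a) {c : ℝ} (hc : 0 ≤ c) :
    ∫ t in Ioi 0, (1 - exp (-(c * t))) * t ^ (-a - 1) = bernsteinConst a * c ^ a := by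
  rcases hc.eq_or_lt with rfl | hc
  · simp [zero_rpow ha.ne']
  have hscale : ∀ t ∈ Ioi (0 : ℝ), (1 - exp (-(c * t))) * t ^ (-a - 1)
      = c ^ (a + 1) * ((1 - exp (-(c * t))) * (c * t) ^ (-a - 1)) := fun t ht ↦ by
    rw [mul_rpow hc.le (le_of_lt ht), mul_left_comm, ← mul_assoc (c ^ (a + 1)),
      ← rpow_add hc, show a + 1 + (-a - 1) = 0 by ring, rpow_zero, one_mul]
  rw [setIntegral_congr_fun measurableSet_Ioi hscale, integral_const_mul,
    integral_comp_mul_left_Ioi (fun u ↦ (1 - exp (-u)) * u ^ (-a - 1)) 0 hc, mul_zero,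
    smul_eq_mul, ← mul_assoc, ← rpow_neg_one, ← rpow_add hc, bernsteinConst,
    show a + 1 + -1 = a by ring, mul_comm]

theorem sum_mul_rpow_le_of_sum_mul_exp_le {κ : Type*} [Fintype κ] (w : κ → ℝ) {D S : κ → ℝ}
    (hD : ∀ k, 0 ≤ D k) (hS : ∀ k, 0 ≤ S k) (ha : 0 < a) (ha1 : a < 1)
    (h : ∀ t, 0 < t → ∑ k, w k * exp (-(S k * t)) ≤ ∑ k, w k * exp (-(D k * t))) :
    ∑ k, w k * D k ^ a ≤ ∑ k, w k * S k ^ a := by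
  have hint : ∀ c : κ → ℝ, (∀ k, 0 ≤ c k) → ∀ k, IntegrableOn
      (fun t ↦ w k * ((1 - exp (-(c k * t))) * t ^ (-a - 1))) (Ioi 0) := fun c hc k ↦
    (integrableOn_one_sub_exp_neg_mul_mul_rpow ha ha1 (hc k)).const_mul _
  have hrepr : ∀ c : κ → ℝ, (∀ k, 0 ≤ c k) → bernsteinConst a * ∑ k, w k * c k ^ a
      = ∫ t in Ioi 0, ∑ k, w k * ((1 - exp (-(c k * t))) * t ^ (-a - 1)) := fun c hc ↦ by
    rw [integral_finsetSum _ fun k _ ↦ hint c hc k, Finset.mul_sum]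
    refine Finset.sum_congr rfl fun k _ ↦ ?_
    rw [integral_const_mul, integral_one_sub_exp_neg_mul_mul_rpow ha (hc k)]
    ring
  have hsplit : ∀ (c : κ → ℝ) (t : ℝ), ∑ k, w k * ((1 - exp (-(c k * t))) * t ^ (-a - 1))
      = (∑ k, w k - ∑ k, w k * exp (-(c k * t))) * t ^ (-a - 1) := fun c t ↦ by
    simp only [sub_mul, mul_sub, one_mul, Finset.sum_sub_distrib, Finset.sum_mul, mul_assoc]
  refine le_of_mul_le_mul_left ?_ (bernsteinConst_pos ha ha1)
  rw [hrepr D hD, hrepr S hS]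
  refine setIntegral_mono_on (integrable_finsetSum _ fun k _ ↦ hint D hD k)
    (integrable_finsetSum _ fun k _ ↦ hint S hS k) measurableSet_Ioi fun t ht ↦ ?_
  rw [hsplit, hsplit]
  exact mul_le_mul_of_nonneg_right (sub_le_sub_left (h t ht) _) (rpow_nonneg (le_of_lt ht) _)

end Bernstein

section Holder

variable {ι E : Type*} [Fintype ι] [NormedAddCommGroup E] [InnerProductSpace ℝ E]

/-- With `gᵢ = λᵢ e^{-t|xᵢ|²}`, the right side is `Σ gᵢgⱼ e^{2t⟨xᵢ,xⱼ⟩}`, and `e^s ≥ 1 + s`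
bounds it below by `(Σ gᵢ)² + 2t |Σ gᵢxᵢ|²`. -/
lemma sum_mul_exp_neg_norm_sq_add_le (lam : ι → ℝ) (hlam : ∀ i, 0 ≤ lam i) (x : ι → E)
    {t : ℝ} (ht : 0 ≤ t) :
    ∑ i, ∑ j, lam i * lam j * exp (-((‖x i‖ ^ 2 + ‖x j‖ ^ 2) * t))
      ≤ ∑ i, ∑ j, lam i * lam j * exp (-(‖x i - x j‖ ^ 2 * t)) := by
  set g : ι → ℝ := fun i ↦ lam i * exp (-(‖x i‖ ^ 2 * t))
  have hg : ∀ i, 0 ≤ g i := fun i ↦ mul_nonneg (hlam i) (exp_nonneg _)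
  calc ∑ i, ∑ j, lam i * lam j * exp (-((‖x i‖ ^ 2 + ‖x j‖ ^ 2) * t))
      = ∑ i, ∑ j, g i * g j := by
        refine Finset.sum_congr rfl fun i _ ↦ Finset.sum_congr rfl fun j _ ↦ ?_
        rw [add_mul, neg_add, exp_add]; ring
    _ ≤ ∑ i, ∑ j, g i * g j + 2 * t * ‖∑ i, g i • x i‖ ^ 2 :=
        le_add_of_nonneg_right (by positivity)
    _ = ∑ i, ∑ j, g i * g j * (1 + 2 * t * ⟪x i, x j⟫) := by
        simp only [norm_sum_smul_sq, Finset.mul_sum, ← Finset.sum_add_distrib]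
        exact Finset.sum_congr rfl fun i _ ↦ Finset.sum_congr rfl fun j _ ↦ by ring
    _ ≤ ∑ i, ∑ j, g i * g j * exp (2 * t * ⟪x i, x j⟫) := by
        gcongr with i _ j _
        · exact mul_nonneg (hg i) (hg j)
        · linarith [add_one_le_exp (2 * t * ⟪x i, x j⟫)]
    _ = ∑ i, ∑ j, lam i * lam j * exp (-(‖x i - x j‖ ^ 2 * t)) := by
        refine Finset.sum_congr rfl fun i _ ↦ Finset.sum_congr rfl fun j _ ↦ ?_
        rw [norm_sub_sq_real, show -((‖x i‖ ^ 2 - 2 * ⟪x i, x j⟫ + ‖x j‖ ^ 2) * t)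
          = -(‖x i‖ ^ 2 * t) + -(‖x j‖ ^ 2 * t) + 2 * t * ⟪x i, x j⟫ by ring, exp_add, exp_add]
        ring

lemma sum_mul_norm_sub_sq_eq (lam : ι → ℝ) (x : ι → E) :
    ∑ i, ∑ j, lam i * lam j * ‖x i - x j‖ ^ 2
      = ∑ i, ∑ j, lam i * lam j * (‖x i‖ ^ 2 + ‖x j‖ ^ 2) - 2 * ‖∑ i, lam i • x i‖ ^ 2 := by
  simp only [norm_sum_smul_sq, Finset.mul_sum, ← Finset.sum_sub_distrib, norm_sub_sq_real]
  exact Finset.sum_congr rfl fun i _ ↦ Finset.sum_congr rfl fun j _ ↦ by ring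

theorem sum_mul_norm_sub_rpow_le (lam : ι → ℝ) (hlam : ∀ i, 0 ≤ lam i) (x : ι → E) {a : ℝ}
    (ha : 0 < a) (ha1 : a ≤ 1) :
    ∑ i, ∑ j, lam i * lam j * (‖x i - x j‖ ^ 2) ^ a
      ≤ ∑ i, ∑ j, lam i * lam j * (‖x i‖ ^ 2 + ‖x j‖ ^ 2) ^ a := by
  rcases ha1.eq_or_lt with rfl | ha1
  · simp only [rpow_one, sum_mul_norm_sub_sq_eq]
    linarith [sq_nonneg ‖∑ i, lam i • x i‖]
  simp only [← Fintype.sum_prod_type']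
  exact sum_mul_rpow_le_of_sum_mul_exp_le (fun k : ι × ι ↦ lam k.1 * lam k.2)
    (fun _ ↦ by positivity) (fun _ ↦ by positivity) ha ha1 fun t ht ↦ by
      simpa only [Fintype.sum_prod_type] using
        sum_mul_exp_neg_norm_sq_add_le lam hlam x ht.le

theorem sum_mul_rpow_add_le (lam : ι → ℝ) (hlam : ∀ i, 0 ≤ lam i) (hsum : ∑ i, lam i = 1)
    (u : ι → ℝ) (hu : ∀ i, 0 ≤ u i) {a : ℝ} (ha : 0 ≤ a) (ha1 : a ≤ 1) :
    ∑ i, ∑ j, lam i * lam j * (u i + u j) ^ a ≤ 2 * ∑ i, lam i * u i ^ a := by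
  calc ∑ i, ∑ j, lam i * lam j * (u i + u j) ^ a
      ≤ ∑ i, ∑ j, lam i * lam j * (u i ^ a + u j ^ a) := by
        gcongr with i _ j _
        · exact mul_nonneg (hlam i) (hlam j)
        · exact rpow_add_le_add_rpow (hu i) (hu j) ha ha1
    _ = (∑ i, lam i * u i ^ a) * ∑ j, lam j + (∑ i, lam i) * ∑ j, lam j * u j ^ a := by
        simp only [Finset.sum_mul_sum, ← Finset.sum_add_distrib]
        exact Finset.sum_congr rfl fun i _ ↦ Finset.sum_congr rfl fun j _ ↦ by ring
    _ = 2 * ∑ i, lam i * u i ^ a := by rw [hsum]; ring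

end Holder

/-- **Gram-type integral identity and Hölder convexity inequality.**
(i) `Σ_{i,j} ⟨xᵢ,xⱼ⟩/(aᵢ+aⱼ)^β = Γ(β)⁻¹ ∫₀^∞ ‖Σ e^{−aᵢt} xᵢ‖² t^{β−1} dt ≥ 0`;
(ii) for a convex combination `λ` and `0 < a ≤ 1`,
`Σ λᵢλⱼ |xᵢ−xⱼ|₂^{2a} ≤ Σ λᵢλⱼ (|xᵢ|₂²+|xⱼ|₂²)^a ≤ 2 Σ λᵢ |xᵢ|₂^{2a}`. -/
theorem gram_integral_and_holder (d n : ℕ) (x : Fin n → EuclideanSpace ℝ (Fin d)) :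
    (∀ (β : ℝ) (a : Fin n → ℝ), 0 < β → (∀ i, 0 < a i) →
      0 ≤ (∑ i, ∑ j, ⟪x i, x j⟫ / (a i + a j) ^ β) ∧
        (∑ i, ∑ j, ⟪x i, x j⟫ / (a i + a j) ^ β)
          = (1 / Real.Gamma β) *
              ∫ t in Set.Ioi (0 : ℝ), ‖∑ i, Real.exp (-(a i) * t) • x i‖ ^ 2 * t ^ (β - 1)) ∧
      ∀ (lam : Fin n → ℝ) (a : ℝ), (∀ i, 0 ≤ lam i) → (∑ i, lam i) = 1 → 0 < a → a ≤ 1 →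
        (∑ i, ∑ j, lam i * lam j * ‖x i - x j‖ ^ (2 * a)
            ≤ ∑ i, ∑ j, lam i * lam j * (‖x i‖ ^ 2 + ‖x j‖ ^ 2) ^ a) ∧
          (∑ i, ∑ j, lam i * lam j * (‖x i‖ ^ 2 + ‖x j‖ ^ 2) ^ a)
            ≤ 2 * ∑ i, lam i * ‖x i‖ ^ (2 * a) := by
  refine ⟨fun β a hβ ha ↦
    ⟨sum_inner_div_rpow_nonneg x hβ ha, sum_inner_div_rpow_eq_integral x hβ ha⟩, ?_⟩
  intro lam a hlam hsum ha ha1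
  have hpow : ∀ y : EuclideanSpace ℝ (Fin d), ‖y‖ ^ (2 * a) = (‖y‖ ^ 2) ^ a := fun y ↦ by
    rw [← rpow_natCast_mul (norm_nonneg y), Nat.cast_ofNat]
  simp only [hpow]
  exact ⟨sum_mul_norm_sub_rpow_le lam hlam x ha ha1,
    sum_mul_rpow_add_le lam hlam hsum _ (fun i ↦ sq_nonneg ‖x i‖) ha.le ha1⟩
end
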